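/- arXiv:1511.04129 — 2 statements merged into one kernel-verified Lean document; each statement's English description precedes it below -/
import Mathlib

section
/- (Gallagher's theorem) If G is a finite group, N ⊴ G, and χ ∈ Irr(G) restricts irreducibly to N, then for every ψ ∈ Irr(G/N) (viewed as a character of G via inflation), the product χψ is an irreducible character of G. -/
/-!
Over `ℂ`, a representation of a finite group is irreducible exactly when its only self-intertwiners
are the scalars. Restricted to `N`, the representation `V ⊗ U` (with `U` inflated to `G`) is a
direct sum of copies of the irreducible `V|_N`, so by Schur's lemma every `N`-endomorphism of
`V ⊗ U` has the form `1 ⊗ C`. Equivariance under all of `G` then forces `C` to commute with the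
action on `U`, so `C` is a scalar. The character of `V ⊗ U` is the product of the two characters.
-/

open CategoryTheory Module

/-- The restriction of a finite-dimensional complex representation of `G` to a subgroup `N`. -/
noncomputable def FDRep.res {G : Type} [Group G] (N : Subgroup G) (V : FDRep ℂ G) :
    FDRep ℂ N :=
  FDRep.of (V.ρ.comp N.subtype)

open TensorProduct

universe u

namespace Representation

variable {k G V : Type*} [CommRing k] [AddCommGroup V] [Module k V]

def HasScalarCommutant [Monoid G] (ρ : Representation k G V) : Prop :=
  ∀ φ : V →ₗ[k] V, (∀ g, φ ∘ₗ ρ g = ρ g ∘ₗ φ) → ∃ c : k, φ = c • LinearMap.id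

theorem HasScalarCommutant.exists_eq_lTensor [Monoid G] {ρ : Representation k G V}
    (hρ : ρ.HasScalarCommutant) {U : Type*} [AddCommGroup U] [Module k U] [Module.Free k U]
    [Module.Finite k U] (f : V ⊗[k] U →ₗ[k] V ⊗[k] U)
    (hf : ∀ g, f ∘ₗ (ρ g).rTensor U = (ρ g).rTensor U ∘ₗ f) :
    ∃ C : Module.End k U, f = C.lTensor V := by
  let b := Module.Free.chooseBasis k U
  let coord (i) : V ⊗[k] U →ₗ[k] V := _root_.TensorProduct.rid k V ∘ₗ (b.coord i).lTensor V
  have coord_comm (i g) : coord i ∘ₗ (ρ g).rTensor U = ρ g ∘ₗ coord i :=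
    TensorProduct.ext' fun v u => by simp [coord]
  have expand (x : V ⊗[k] U) : x = ∑ i, coord i x ⊗ₜ b i := by
    induction x using TensorProduct.induction_on with
    | zero => simp
    | tmul v u =>
      simp only [coord, LinearMap.comp_apply, LinearMap.lTensor_tmul, LinearEquiv.coe_coe,
        _root_.TensorProduct.rid_tmul, Basis.coord_apply]
      simp_rw [TensorProduct.smul_tmul, ← TensorProduct.tmul_sum, b.sum_repr]
    | add x y hx hy =>
      conv_lhs => rw [hx, hy]
      simp only [map_add, TensorProduct.add_tmul, Finset.sum_add_distrib]
  have block_scalar (i j) : ∃ c : k,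
      coord i ∘ₗ f ∘ₗ (TensorProduct.mk k V U).flip (b j) = c • LinearMap.id := by
    refine hρ _ fun g => LinearMap.ext fun v => ?_
    have hfg := LinearMap.congr_fun (hf g) (v ⊗ₜ b j)
    have hcoord := LinearMap.congr_fun (coord_comm i g) (f (v ⊗ₜ b j))
    simp only [LinearMap.comp_apply, LinearMap.rTensor_tmul] at hfg hcoord
    simp only [LinearMap.comp_apply, LinearMap.flip_apply, TensorProduct.mk_apply, hfg, hcoord]
  choose c hc using block_scalar
  refine ⟨Matrix.toLin b b (Matrix.of c),
    TensorProduct.ext (LinearMap.ext fun v => b.ext fun j => ?_)⟩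
  have hcv (i) : coord i (f (v ⊗ₜ b j)) = c i j • v := LinearMap.congr_fun (hc i j) v
  show f (v ⊗ₜ b j) = v ⊗ₜ Matrix.toLin b b (Matrix.of c) (b j)
  rw [Matrix.toLin_self, expand (f _), TensorProduct.tmul_sum]
  simp_rw [hcv, TensorProduct.smul_tmul, Matrix.of_apply]

theorem HasScalarCommutant.tprod_comp_mk' [Group G] [Module.Free k V] [Nontrivial V]
    {U : Type*} [AddCommGroup U] [Module k U] [Module.Free k U] [Module.Finite k U]
    {N : Subgroup G} [N.Normal] {ρ : Representation k G V} {σ : Representation k (G ⧸ N) U}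
    (hρ : HasScalarCommutant (ρ.comp N.subtype)) (hσ : σ.HasScalarCommutant) :
    (ρ.tprod (σ.comp (QuotientGroup.mk' N))).HasScalarCommutant := by
  intro f hf
  have action_of_mem (n : N) :
      ρ.tprod (σ.comp (QuotientGroup.mk' N)) n = (ρ n).rTensor U := by
    have : QuotientGroup.mk' N (n : G) = 1 := (QuotientGroup.eq_one_iff _).mpr n.2
    rw [tprod_apply, MonoidHom.comp_apply, this, map_one]
    rfl
  obtain ⟨C, rfl⟩ := hρ.exists_eq_lTensor f fun n => by
    simpa only [MonoidHom.comp_apply, Subgroup.subtype_apply, action_of_mem] using hf n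
  have hC (q : G ⧸ N) : C ∘ₗ σ q = σ q ∘ₗ C := by
    obtain ⟨g, rfl⟩ := QuotientGroup.mk_surjective q
    have key : (C ∘ₗ σ g).lTensor V = (σ g ∘ₗ C).lTensor V :=
      calc (C ∘ₗ σ g).lTensor V
          = C.lTensor V ∘ₗ ρ.tprod (σ.comp (QuotientGroup.mk' N)) g ∘ₗ (ρ g⁻¹).rTensor U :=
            TensorProduct.ext' fun v u => by simp
        _ = ρ.tprod (σ.comp (QuotientGroup.mk' N)) g ∘ₗ C.lTensor V ∘ₗ (ρ g⁻¹).rTensor U := by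
            rw [← LinearMap.comp_assoc, hf g, LinearMap.comp_assoc]
        _ = (σ g ∘ₗ C).lTensor V := TensorProduct.ext' fun v u => by simp
    rw [← sub_eq_zero, FaithfullyFlat.zero_iff_lTensor_zero k V, LinearMap.lTensor_sub, key,
      sub_self]
  obtain ⟨c, rfl⟩ := hσ C hC
  exact ⟨c, by rw [LinearMap.lTensor_smul, LinearMap.lTensor_id]⟩

end Representation

namespace FDRep

theorem nontrivial_of_simple {R G : Type*} [CommRing R] [Monoid G] (X : FDRep R G) [Simple X] :
    Nontrivial X := by
  by_contra h
  rw [not_nontrivial_iff_subsingleton] at h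
  exact id_nonzero X (by ext v; exact Subsingleton.elim _ _)

theorem hasScalarCommutant_of_simple {k G : Type*} [Field k] [IsAlgClosed k] [Monoid G]
    (X : FDRep k G) [Simple X] : Representation.HasScalarCommutant X.ρ := by
  intro φ hφ
  let F : X ⟶ X := ⟨FGModuleCat.ofHom φ, fun g => by ext v; exact LinearMap.congr_fun (hφ g) v⟩
  obtain ⟨c, hc⟩ := endomorphism_simple_eq_smul_id k F
  exact ⟨c, LinearMap.ext fun v => (ConcreteCategory.congr_hom (congrArg Action.Hom.hom hc) v).symm⟩

theorem simple_of_hasScalarCommutant {k G : Type u} [Field k] [IsAlgClosed k] [Group G] [Finite G]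
    [NeZero (Nat.card G : k)] (X : FDRep k G) [Nontrivial X]
    (hX : Representation.HasScalarCommutant X.ρ) : Simple X := by
  have hid : 𝟙 X ≠ 0 := fun h0 => by
    obtain ⟨v, hv⟩ := exists_ne (0 : X)
    exact hv (ConcreteCategory.congr_hom (congrArg Action.Hom.hom h0) v :)
  rw [simple_iff_end_is_rank_one, finrank_eq_one_iff_of_nonzero' _ hid]
  intro F
  obtain ⟨c, hc⟩ := hX F.hom.hom.hom fun g => LinearMap.ext fun v =>
    ConcreteCategory.congr_hom (F.comm g) v
  exact ⟨c, by ext v; exact (LinearMap.congr_fun hc v).symm⟩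

end FDRep

theorem gallagher_general
    {G : Type} [Group G] [Fintype G] (N : Subgroup G) [N.Normal]
    (V : FDRep ℂ G) (hres : Simple (FDRep.res N V))
    (U : FDRep ℂ (G ⧸ N)) (hU : Simple U) :
    ∃ W : FDRep ℂ G, Simple W ∧
      ∀ g : G, W.character g = V.character g * U.character (QuotientGroup.mk g) := by
  have : Nontrivial V := FDRep.nontrivial_of_simple (FDRep.res N V)
  have : Nontrivial U := FDRep.nontrivial_of_simple U
  refine ⟨FDRep.of (Representation.tprod V.ρ (U.ρ.comp (QuotientGroup.mk' N))), ?_, fun g => ?_⟩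
  · exact FDRep.simple_of_hasScalarCommutant _ <|
      (FDRep.hasScalarCommutant_of_simple (FDRep.res N V)).tprod_comp_mk'
        (FDRep.hasScalarCommutant_of_simple U)
  · exact LinearMap.trace_tensorProduct' _ _

/-- Gallagher's theorem: if `G` is a finite group, `N ⊴ G`, and `χ ∈ Irr(G)` restricts
irreducibly to `N`, then for every `ψ ∈ Irr(G/N)` (viewed as a character of `G` via inflation),
the product `χψ` is an irreducible character of `G`. -/
theorem gallagher
    {G : Type} [Group G] [Fintype G] (N : Subgroup G) [N.Normal]
    (V : FDRep ℂ G) (hV : Simple V) (hres : Simple (FDRep.res N V))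
    (U : FDRep ℂ (G ⧸ N)) (hU : Simple U) :
    ∃ W : FDRep ℂ G, Simple W ∧
      ∀ g : G, W.character g = V.character g * U.character (QuotientGroup.mk g) :=
  gallagher_general N V hres U hU
end

section
/- Suppose M ⊴ G' = G'' (the derived subgroup of G is perfect) and every linear character λ of M satisfies λ^g = λ for all g ∈ G'. Then M' = [M, G'] and the order of M/M' divides the order of the Schur multiplier of G'/M. -/
/-- The Schur multiplier of a group `Q`, realized as the second cohomology group
`H²(Q, ℂ*)` with trivial action. -/
noncomputable def schurMultiplier (Q : Type) [Group Q] : Type :=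
  groupCohomology.H2 (Rep.trivial ℤ Q (Additive ℂˣ))

/-!
Let `N ⊴ K` and fix a set-theoretic section `s` of `K → K/N`. Its factor set
`f(a, b) = s(a) s(b) s(ab)⁻¹` takes values in `N`, and for a `K`-invariant homomorphism
`λ : N → A` to an abelian group, `λ ∘ f` is a 2-cocycle of `K/N` (transgression). If `λ ∘ f = δx`
is a coboundary, then `k ↦ λ(k s(kN)⁻¹) x(kN)` is a homomorphism `K → A` extending `λ`; when `K`
is perfect it is trivial, so `λ = 1` and transgression is injective. For `K = G'`, `N = M` and
`A = ℂˣ` this embeds `Hom(M, ℂˣ) ≅ M/M'` into the Schur multiplier of `G'/M`.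

For `m ∈ M` and `g ∈ G'`, invariance makes every character of `M` vanish on
`[m, g] = m (g m g⁻¹)⁻¹`, and characters of a finite group separate points of its
abelianization, so `[M, G'] ≤ M'`.
-/

open Subgroup groupCohomology
open scoped commutatorElement

noncomputable section Transgression

variable {K : Type} [Group K] (N : Subgroup K) [N.Normal] {A : Type} [CommGroup A]

def factorSet (a b : K ⧸ N) : N :=
  ⟨a.out * b.out * (a * b).out⁻¹, by rw [← QuotientGroup.eq_one_iff]; simp⟩

lemma factorSet_mul_factorSet (a b c : K ⧸ N) :
    factorSet N a b * factorSet N (a * b) c =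
      MulAut.conjNormal a.out (factorSet N b c) * factorSet N a (b * c) := by
  ext
  simp only [factorSet, Subgroup.coe_mul, MulAut.conjNormal_apply, mul_assoc]
  group

def sectionDefect (k : K) : N :=
  ⟨k * (k : K ⧸ N).out⁻¹, by rw [← QuotientGroup.eq_one_iff]; simp⟩

lemma sectionDefect_mul (k l : K) :
    sectionDefect N (k * l) = sectionDefect N k *
      MulAut.conjNormal (k : K ⧸ N).out (sectionDefect N l) * factorSet N k l := by
  ext
  simp only [sectionDefect, factorSet, Subgroup.coe_mul, MulAut.conjNormal_apply,
    QuotientGroup.mk_mul]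
  group

lemma sectionDefect_coe (n : N) : sectionDefect N n = n * sectionDefect N 1 := by
  ext
  simp [sectionDefect, (QuotientGroup.eq_one_iff _).mpr n.2]

variable (A) in
def invariantChars : Subgroup (N →* A) where
  carrier := {χ | ∀ (k : K) (n : N), χ (MulAut.conjNormal k n) = χ n}
  mul_mem' hχ hψ k n := by simp [hχ k n, hψ k n]
  one_mem' k n := rfl
  inv_mem' hχ k n := by simp [hχ k n]

variable {N}

def transgressionCocycle (χ : N →* A) (p : (K ⧸ N) × (K ⧸ N)) : Additive A :=
  .ofMul (χ (factorSet N p.1 p.2))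

lemma transgressionCocycle_mem_cocycles₂ {χ : N →* A} (hχ : χ ∈ invariantChars N A) :
    transgressionCocycle χ ∈ cocycles₂ (Rep.trivial ℤ (K ⧸ N) (Additive A)) := by
  rw [mem_cocycles₂_iff]
  intro a b c
  change Additive.ofMul (χ (factorSet N (a * b) c) * χ (factorSet N a b)) =
    Additive.ofMul (χ (factorSet N b c) * χ (factorSet N a (b * c)))
  rw [mul_comm (χ _), ← map_mul, factorSet_mul_factorSet, map_mul, hχ]

variable (N A) in
def transgressionCocycles :
    Additive (invariantChars N A) →+ cocycles₂ (Rep.trivial ℤ (K ⧸ N) (Additive A)) :=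
  AddMonoidHom.mk' (fun χ => ⟨transgressionCocycle (A := A) χ.toMul,
      transgressionCocycle_mem_cocycles₂ χ.toMul.2⟩)
    fun _ _ => Subtype.ext <| funext fun _ => by rw [Submodule.coe_add, Pi.add_apply]; rfl

variable (N A) in
def transgression : Additive (invariantChars N A) →+ H2 (Rep.trivial ℤ (K ⧸ N) (Additive A)) :=
  (H2π _).hom.toAddMonoidHom.comp (transgressionCocycles N A)

lemma exists_lift_of_transgression_eq_zero {χ : invariantChars N A}
    (h : transgression N A (.ofMul χ) = 0) : ∃ ψ : K →* A, ψ.comp N.subtype = χ := by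
  obtain ⟨x, hx⟩ := (H2π_eq_zero_iff _).mp h
  set y : K ⧸ N → A := fun q => Additive.toMul (x q : Additive A)
  have hy (a b : K ⧸ N) : y b / y (a * b) * y a = χ.1 (factorSet N a b) :=
    congrArg Additive.toMul (congrFun hx (a, b))
  have hχ : χ.1 ∈ invariantChars N A := χ.2
  let ψ : K →* A := MonoidHom.mk' (fun k => χ.1 (sectionDefect N k) * y k) fun k l => by
    rw [sectionDefect_mul, map_mul, map_mul, hχ, ← hy, QuotientGroup.mk_mul]
    simp [div_eq_mul_inv, mul_comm, mul_left_comm, mul_assoc]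
  refine ⟨ψ, MonoidHom.ext fun n => ?_⟩
  calc ψ n = χ.1 n * ψ 1 := by
        simp only [ψ, MonoidHom.mk'_apply, sectionDefect_coe, map_mul, QuotientGroup.mk_one,
          (QuotientGroup.eq_one_iff _).mpr n.2, mul_assoc]
    _ = χ.1 n := by rw [map_one, mul_one]

lemma Group.IsPerfect.monoidHom_eq_one [Group.IsPerfect K] (ψ : K →* A) : ψ = 1 :=
  MonoidHom.ext fun _ => Abelianization.commutator_subset_ker ψ Group.IsPerfect.mem_commutator

lemma transgression_injective [Group.IsPerfect K] : Function.Injective (transgression N A) := by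
  refine (injective_iff_map_eq_zero _).mpr fun χ hχ => ?_
  obtain ⟨ψ, hψ⟩ := exists_lift_of_transgression_eq_zero hχ
  rw [Group.IsPerfect.monoidHom_eq_one ψ] at hψ
  exact congrArg Additive.ofMul (Subtype.ext hψ.symm)

lemma card_invariantChars_dvd_card_H2 [Group.IsPerfect K] :
    Nat.card (invariantChars N A) ∣ Nat.card (H2 (Rep.trivial ℤ (K ⧸ N) (Additive A))) :=
  (AddSubgroup.card_dvd_of_injective (transgression N A) transgression_injective :
    Nat.card (Additive (invariantChars N A)) ∣ _)

end Transgression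

section Characters

variable {H : Type} [Group H] [Finite H]

instance Complex.hasEnoughRootsOfUnity_exponent : HasEnoughRootsOfUnity ℂ (Monoid.exponent H) :=
  have : NeZero (Monoid.exponent H : ℂ) := ⟨Nat.cast_ne_zero.mpr Monoid.exponent_ne_zero_of_finite⟩
  inferInstance

lemma card_abelianization_eq_card_monoidHom_units :
    Nat.card (Abelianization H) = Nat.card (H →* ℂˣ) := by
  rw [← CommGroup.card_monoidHom_of_hasEnoughRootsOfUnity (Abelianization H) ℂ]
  exact Nat.card_congr Abelianization.lift.symm

lemma mem_commutator_of_forall_monoidHom_units_eq_one {h : H} (hh : ∀ χ : H →* ℂˣ, χ h = 1) :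
    h ∈ commutator H := by
  rw [← Abelianization.ker_of, MonoidHom.mem_ker, ← map_one Abelianization.of,
    ← CommGroup.forall_apply_eq_apply_iff (G := Abelianization H) (M := ℂ)]
  intro φ
  rw [map_one, map_one]
  exact hh (φ.comp Abelianization.of)

end Characters

section Ambient

variable {G : Type} [Group G] {M K : Subgroup G} [hM : M.Normal]

lemma commutator_le_commutator_self_of_forall_char_conj_eq [Finite M]
    (hfix : ∀ (lam : M →* ℂˣ) (g : G), g ∈ K → ∀ m : M,
      lam ⟨g * ↑m * g⁻¹, hM.conj_mem m m.2 g⟩ = lam m) :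
    ⁅M, K⁆ ≤ ⁅M, M⁆ := by
  rw [commutator_le]
  intro m hm g hg
  set x : M := ⟨m, hm⟩ * ⟨g * m * g⁻¹, hM.conj_mem m hm g⟩⁻¹
  have hx : x ∈ commutator M := mem_commutator_of_forall_monoidHom_units_eq_one fun χ => by
    rw [map_mul, map_inv, hfix χ g hg ⟨m, hm⟩, mul_inv_cancel]
  have hx_coe : (x : G) = ⁅m, g⁆ := by
    simp only [x, commutatorElement_def, Subgroup.coe_mul, Subgroup.coe_inv]; group
  rw [← hx_coe, ← map_subtype_commutator]
  exact mem_map_of_mem M.subtype hx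

lemma invariantChars_subgroupOf_eq_top {A : Type} [CommGroup A] (hle : M ≤ K)
    (hfix : ∀ (lam : M →* A) (g : G), g ∈ K → ∀ m : M,
      lam ⟨g * ↑m * g⁻¹, hM.conj_mem m m.2 g⟩ = lam m) :
    invariantChars (M.subgroupOf K) A = ⊤ :=
  eq_top_iff.mpr fun χ _ k n =>
    hfix (χ.comp (subgroupOfEquivOfLe hle).symm.toMonoidHom) k k.2 (subgroupOfEquivOfLe hle n)

end Ambient

/-- Suppose `M ⊴ G' = G''` and every linear character `λ` of `M` satisfies `λ^g = λ` for all
`g ∈ G'`.  Then `M' = [M, G']` and `|M/M'|` divides the order of the Schur multiplier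
of `G'/M`. -/
theorem commutator_eq_and_card_dvd_schurMultiplier
    {G : Type} [Group G] [Fintype G] (M : Subgroup G) [hM : M.Normal]
    (hle : M ≤ commutator G)
    (hperf : commutator G = ⁅commutator G, commutator G⁆)
    (hfix : ∀ (lam : M →* ℂˣ) (g : G), g ∈ commutator G → ∀ m : M,
      lam ⟨g * ↑m * g⁻¹, hM.conj_mem m m.2 g⟩ = lam m) :
    ⁅M, M⁆ = ⁅M, commutator G⁆ ∧
      Nat.card (M ⧸ commutator M) ∣
        Nat.card (schurMultiplier
          (↥(commutator G) ⧸ M.subgroupOf (commutator G))) := by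
  have : Group.IsPerfect (commutator G) := isPerfect_iff.mpr hperf.symm
  refine ⟨le_antisymm (commutator_mono le_rfl hle)
    (commutator_le_commutator_self_of_forall_char_conj_eq hfix), ?_⟩
  calc Nat.card (M ⧸ commutator M) = Nat.card (M →* ℂˣ) :=
        card_abelianization_eq_card_monoidHom_units
    _ = Nat.card (M.subgroupOf (commutator G) →* ℂˣ) :=
        Nat.card_congr (subgroupOfEquivOfLe hle).monoidHomCongrLeft.toEquiv.symm
    _ = Nat.card (invariantChars (M.subgroupOf (commutator G)) ℂˣ) := by
        rw [invariantChars_subgroupOf_eq_top hle hfix, card_top]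
    _ ∣ _ := card_invariantChars_dvd_card_H2
end
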